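/- arXiv:1508.05766 — 3 statements merged into one kernel-verified Lean document; each statement's English description precedes it below -/
import Mathlib

section
/- For every n and N there exists an m such that: if I is a path instance of length ℓ over a finite set A and 1 < a < b < ℓ are such that (1) each set B_i has cardinality at most N, (2) all sets B_i and all relations B_{i,i+1} are invariant under a chain of n Hagemann–Mitschke terms on A, and (3) there are at least m distinct indices j ∈ [a, b) such that B_{j,j+1} contains a backward edge, then the instance I_{[a,b]} is not subdirect. -/
namespace CSPPaper

/-- A relational structure on `A`: a family of finitary relations (the basic
relations), a relation of arity `n` being a set of `n`-tuples `Fin n → A`. -/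
structure RelStruct (A : Type) where
  basic : Set (Σ n : ℕ, Set (Fin n → A))

/-- A CSP instance with variables `V` over domain `A`: a set of constraints,
each consisting of a scope (a tuple of variables) and a constraint relation. -/
structure Instance (A : Type) (V : Type) where
  constraints : Set (Σ n : ℕ, (Fin n → V) × Set (Fin n → A))

/-- `f : V → A` is a solution of the instance `I`. -/
def Instance.Sol {A V : Type} (I : Instance A V) (f : V → A) : Prop :=
  ∀ c ∈ I.constraints, (fun i => f (c.2.1 i)) ∈ c.2.2

def Instance.Satisfiable {A V : Type} (I : Instance A V) : Prop :=
  ∃ f, I.Sol f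

/-- `I` is an instance of `CSP(𝔸)`: all its constraint relations are basic
relations of `𝔸`. -/
def IsCSPInstance {A V : Type} (𝔸 : RelStruct A) (I : Instance A V) : Prop :=
  ∀ c ∈ I.constraints, (⟨c.1, c.2.2⟩ : Σ n : ℕ, Set (Fin n → A)) ∈ 𝔸.basic

/-- An atom of a Datalog rule over the variable set `Fin r`: a predicate
(a relation on `A`) applied to a tuple of variables. -/
structure Atom (A : Type) (r : ℕ) where
  arity : ℕ
  scope : Fin arity → Fin r
  rel : Set (Fin arity → A)

def Atom.holds {A : Type} {r : ℕ} (a : Atom A r) (f : Fin r → A) : Prop :=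
  (fun i => f (a.scope i)) ∈ a.rel

/-- A rule of the `r`-ary maximal symmetric Datalog program `𝒫_𝔸^r` consistent
with `𝔸`: a linear Datalog rule on at most `r` variables, whose head is an IDB
(an arbitrary relation on `A` of arity at most `r`), whose body contains at most
one IDB atom (`idb`) and otherwise non-IDB atoms for basic relations of `𝔸`
of arity at most `r` (`edb`, without repetition), such that the rule is
consistent with `𝔸`, and, if the body contains an IDB atom, its mirror image is
also consistent with `𝔸`. -/
structure Rule (A : Type) (𝔸 : RelStruct A) (r : ℕ) where
  head : Atom A r
  idb : Option (Atom A r)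
  edb : List (Atom A r)
  head_arity : head.arity ≤ r
  idb_arity : ∀ a ∈ idb, a.arity ≤ r
  edb_arity : ∀ a ∈ edb, a.arity ≤ r
  edb_basic : ∀ a ∈ edb, (⟨a.arity, a.rel⟩ : Σ n : ℕ, Set (Fin n → A)) ∈ 𝔸.basic
  nodup : edb.Nodup
  consistent : ∀ f : Fin r → A,
    (∀ a ∈ idb, a.holds f) → (∀ a ∈ edb, a.holds f) → head.holds f
  mirror : ∀ a ∈ idb, ∀ f : Fin r → A,
    head.holds f → (∀ b ∈ edb, b.holds f) → a.holds f

/-- `Derives 𝔸 r I ρ R`: the `r`-ary maximal symmetric Datalog program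
`𝒫_𝔸^r` consistent with `𝔸`, run on the instance `I`, derives `R(ρ)`.
This holds if `(ρ, R)` is a constraint of `I`, or if some rule of `𝒫_𝔸^r`
with head `R(τ)` admits an evaluation `ω` of its variables into `V` with
`ω ∘ τ = ρ`, whose (at most one) IDB body atom is derived and whose non-IDB
body atoms are constraints of `I` under `ω`. -/
inductive Derives {A V : Type} (𝔸 : RelStruct A) (r : ℕ) (I : Instance A V) :
    ∀ {n : ℕ}, (Fin n → V) → Set (Fin n → A) → Prop
  | base {n : ℕ} (ρ : Fin n → V) (R : Set (Fin n → A)) :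
      (⟨n, ρ, R⟩ : Σ n : ℕ, (Fin n → V) × Set (Fin n → A)) ∈ I.constraints →
      Derives 𝔸 r I ρ R
  | step (rule : Rule A 𝔸 r) (ω : Fin r → V) :
      (∀ a ∈ rule.idb, Derives 𝔸 r I (fun i => ω (a.scope i)) a.rel) →
      (∀ a ∈ rule.edb,
        (⟨a.arity, fun i => ω (a.scope i), a.rel⟩ :
          Σ n : ℕ, (Fin n → V) × Set (Fin n → A)) ∈ I.constraints) →
      Derives 𝔸 r I (fun i => ω (rule.head.scope i)) rule.head.rel

/-- `𝒫_𝔸^r(I) ⊢ G`: the program derives a goal predicate, i.e. an empty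
relation of arity at most `r`. -/
def DerivesGoal {A V : Type} (𝔸 : RelStruct A) (r : ℕ) (I : Instance A V) : Prop :=
  ∃ (n : ℕ) (ρ : Fin n → V), n ≤ r ∧ Derives 𝔸 r I ρ (∅ : Set (Fin n → A))

/-- `𝒫_𝔸^r(I) ⊢ J`: the program run on `I` derives every constraint of `J`. -/
def DerivesInstance {A V : Type} (𝔸 : RelStruct A) (r : ℕ) (I J : Instance A V) : Prop :=
  ∀ c ∈ J.constraints, Derives 𝔸 r I c.2.1 c.2.2

/-- An `m`-ary operation `t` preserves the `n`-ary relation `R`. -/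
def PreservesRel {A : Type} {m n : ℕ} (t : (Fin m → A) → A) (R : Set (Fin n → A)) : Prop :=
  ∀ rows : Fin m → Fin n → A, (∀ j, rows j ∈ R) → (fun i => t (fun j => rows j i)) ∈ R

/-- A polymorphism of `𝔸`: an operation preserving all basic relations. -/
def IsPolymorphism {A : Type} {m : ℕ} (𝔸 : RelStruct A) (t : (Fin m → A) → A) : Prop :=
  ∀ R ∈ 𝔸.basic, PreservesRel t R.2

def ternaryOp {A : Type} (p : A → A → A → A) : (Fin 3 → A) → A :=
  fun v => p (v 0) (v 1) (v 2)

/-- A chain of `n` Hagemann–Mitschke terms: idempotent ternary operations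
`p 0, …, p n` with `p 0 x y z = x`, `p k x x y = p (k+1) x y y`, `p n x y z = z`. -/
def IsHMChain {A : Type} (n : ℕ) (p : ℕ → A → A → A → A) : Prop :=
  (∀ k ≤ n, ∀ x : A, p k x x x = x) ∧
  (∀ x y z : A, p 0 x y z = x) ∧
  (∀ x y z : A, p n x y z = z) ∧
  (∀ k < n, ∀ x y : A, p k x x y = p (k + 1) x y y)

def Pres3Set {A : Type} (p : A → A → A → A) (S : Set A) : Prop :=
  ∀ x y z, x ∈ S → y ∈ S → z ∈ S → p x y z ∈ S

def Pres3Rel {A : Type} (p : A → A → A → A) (E : Set (A × A)) : Prop :=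
  ∀ u v w, u ∈ E → v ∈ E → w ∈ E → (p u.1 v.1 w.1, p u.2 v.2 w.2) ∈ E

def PresOpSet {A : Type} {m : ℕ} (t : (Fin m → A) → A) (S : Set A) : Prop :=
  ∀ x : Fin m → A, (∀ j, x j ∈ S) → t x ∈ S

def PresOpRel {A : Type} {m : ℕ} (t : (Fin m → A) → A) (E : Set (A × A)) : Prop :=
  ∀ x y : Fin m → A, (∀ j, (x j, y j) ∈ E) → (t x, t y) ∈ E

/-- A path instance of length `len`: variables `1, …, len`, one unary
constraint `B i` on each variable `i ∈ [1, len]`, and one binary constraint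
`E i` with scope `(i, i+1)` for each `i ∈ [1, len-1]`. -/
structure PathInstance (A : Type) where
  len : ℕ
  B : ℕ → Set A
  E : ℕ → Set (A × A)

/-- A solution of the subinstance of the path instance `I` induced by `[a, b]`. -/
def IsSolutionOn {A : Type} (I : PathInstance A) (a b : ℕ) (s : ℕ → A) : Prop :=
  (∀ i, a ≤ i → i ≤ b → s i ∈ I.B i) ∧
  (∀ i, a ≤ i → i + 1 ≤ b → (s i, s (i + 1)) ∈ I.E i)

def IsSolution {A : Type} (I : PathInstance A) (s : ℕ → A) : Prop :=
  IsSolutionOn I 1 I.len s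

def unaryRel {A : Type} (S : Set A) : Set (Fin 1 → A) := {f | f 0 ∈ S}

def pairRel {A : Type} (E : Set (A × A)) : Set (Fin 2 → A) := {f | (f 0, f 1) ∈ E}

/-- The path instance `I`, presented as a CSP instance on the variable set `ℕ`. -/
def PathInstance.toInstance {A : Type} (I : PathInstance A) : Instance A ℕ where
  constraints :=
    {c | (∃ i, 1 ≤ i ∧ i ≤ I.len ∧
            c = ⟨1, fun _ => i, unaryRel (I.B i)⟩) ∨
         (∃ i, 1 ≤ i ∧ i + 1 ≤ I.len ∧
            c = ⟨2, ![i, i + 1], pairRel (I.E i)⟩)}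

/-- An `n`-braid in the path instance `I`: solutions `s 0, …, s n` and indices
`1 ≤ idx 1 < … < idx n ≤ I.len` with `s k (idx k) = s (k+1) (idx k)` and
`s (k-1) (idx (k+1)) = s k (idx (k+1))` for `k = 1, …, n-1`. -/
def IsBraid {A : Type} (I : PathInstance A) (n : ℕ) (s : ℕ → ℕ → A) (idx : ℕ → ℕ) : Prop :=
  (∀ k ≤ n, IsSolution I (s k)) ∧
  1 ≤ idx 1 ∧ idx n ≤ I.len ∧
  (∀ k, 1 ≤ k → k < n → idx k < idx (k + 1)) ∧
  (∀ k, 1 ≤ k → k + 1 ≤ n →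
    s k (idx k) = s (k + 1) (idx k) ∧ s (k - 1) (idx (k + 1)) = s k (idx (k + 1)))

/-- The binary constraint of `I` with scope `(i, i+1)` is subdirect. -/
def SubdirectAt {A : Type} (I : PathInstance A) (i : ℕ) : Prop :=
  (I.B i).Nonempty ∧ (I.B (i + 1)).Nonempty ∧
  (∀ a ∈ I.B i, ∃ b ∈ I.B (i + 1), (a, b) ∈ I.E i) ∧
  (∀ b ∈ I.B (i + 1), ∃ a ∈ I.B i, (a, b) ∈ I.E i)

/-- The subinstance of `I` induced by `[a, b]` is subdirect. -/
def SubdirectOn {A : Type} (I : PathInstance A) (a b : ℕ) : Prop :=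
  ∀ i, a ≤ i → i + 1 ≤ b → SubdirectAt I i

def Subdirect {A : Type} (I : PathInstance A) : Prop := SubdirectOn I 1 I.len

/-- The sets `C_i`: `C 1 = B 1` and
`C (i+1) = {b ∈ B (i+1) | ∃ c ∈ C i, (c, b) ∈ E i}`. -/
def reachSet {A : Type} (I : PathInstance A) : ℕ → Set A
  | 0 => ∅
  | 1 => I.B 1
  | (i + 2) => {b ∈ I.B (i + 2) | ∃ c ∈ reachSet I (i + 1), (c, b) ∈ I.E (i + 1)}

/-- `B_{i,i+1}` contains a backward edge: an edge `(b, c) ∈ E i` with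
`b ∈ B i \ C i` and `c ∈ C (i+1)`. -/
def BackwardAt {A : Type} (I : PathInstance A) (i : ℕ) : Prop :=
  1 ≤ i ∧ i + 1 ≤ I.len ∧
  ∃ b c, (b, c) ∈ I.E i ∧ b ∈ I.B i ∧ b ∉ reachSet I i ∧ c ∈ reachSet I (i + 1)

/-- Adjacency in the graph `Conn(I_{[lo,hi]})`: its vertices are pairs `(i, a)`
with `a ∈ B i`, `lo ≤ i ≤ hi`, and `(i, a)` is adjacent to `(i+1, b)` whenever
`(a, b) ∈ E i`. -/
def connAdj {A : Type} (I : PathInstance A) (lo hi : ℕ) (p q : ℕ × A) : Prop :=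
  lo ≤ p.1 ∧ p.1 + 1 ≤ hi ∧ q.1 = p.1 + 1 ∧
  p.2 ∈ I.B p.1 ∧ q.2 ∈ I.B q.1 ∧ (p.2, q.2) ∈ I.E p.1

/-- `λ_{I,lo,hi}`: the pairs `(a, b) ∈ B lo × B hi` joined by an undirected path
in `Conn(I_{[lo,hi]})`. -/
def lamRel {A : Type} (I : PathInstance A) (lo hi : ℕ) : Set (A × A) :=
  {ab | ab.1 ∈ I.B lo ∧ ab.2 ∈ I.B hi ∧
    Relation.ReflTransGen (fun p q => connAdj I lo hi p q ∨ connAdj I lo hi q p)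
      (lo, ab.1) (hi, ab.2)}

open Classical in
/-- The variable set `U` of the instance `I_λ`: the variables `1`, `len`, and
`i, i+1` for every index `i` such that `B_{i,i+1}` has a backward edge. -/
noncomputable def lamVars {A : Type} (I : PathInstance A) : Finset ℕ :=
  (Finset.Icc 1 I.len).filter
    (fun v => v = 1 ∨ v = I.len ∨ BackwardAt I v ∨ (2 ≤ v ∧ BackwardAt I (v - 1)))

/-- The `t`-th smallest element of `U` (`1`-indexed). -/
noncomputable def lamEnum {A : Type} (I : PathInstance A) (t : ℕ) : ℕ :=
  ((lamVars I).sort (· ≤ ·)).getD (t - 1) 0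

/-- The instance `I_λ`, presented as a path instance whose `t`-th variable is
the `t`-th smallest element of `U`: it consists of the subinstance of `I`
induced by `U`, where each gap between consecutive elements `u < w` of `U` with
`w > u + 1` is filled by the binary constraint `λ_{I,u,w}`. -/
noncomputable def lamInst {A : Type} (I : PathInstance A) : PathInstance A where
  len := (lamVars I).card
  B := fun t => I.B (lamEnum I t)
  E := fun t =>
    if lamEnum I (t + 1) = lamEnum I t + 1 then I.E (lamEnum I t)
    else lamRel I (lamEnum I t) (lamEnum I (t + 1))

/-- Unpacking an `m`-tuple of elements of `V^k` into an `m*k`-tuple of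
elements of `V`. -/
def unpackTuple {X : Type} {m k : ℕ} (σ : Fin m → Fin k → X) : Fin (m * k) → X :=
  fun t => σ t.divNat t.modNat

/-- Unpacking an `m`-ary relation on `A^k` into an `m*k`-ary relation on `A`. -/
def unpackRel {A : Type} {m k : ℕ} (U : Set (Fin m → Fin k → A)) :
    Set (Fin (m * k) → A) :=
  {t | ∃ u ∈ U, ∀ i : Fin (m * k), t i = u i.divNat i.modNat}

/-- The instance `I` has pathwidth at most `p`. -/
def PathwidthLE {A V : Type} (I : Instance A V) (p : ℕ) : Prop :=
  ∃ (m : ℕ) (U : Fin m → Set V),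
    (∀ v : V, ∃ i, v ∈ U i) ∧
    (∀ i, (U i).Finite ∧ (U i).ncard ≤ p + 1) ∧
    (∀ i j q : Fin m, i ≤ q → q ≤ j → ∀ v, v ∈ U i → v ∈ U j → v ∈ U q) ∧
    (∀ c ∈ I.constraints, ∃ i, Set.range c.2.1 ⊆ U i)

/-- `𝔸` has pathwidth duality `p`: for every unsatisfiable instance `I` of
`CSP(𝔸)` there is an unsatisfiable instance `J` of `CSP(𝔸)` of pathwidth at
most `p` such that identifying some variables of `J` (along `h`) yields a
subinstance of `I`. -/
def HasPathwidthDuality {A : Type} (𝔸 : RelStruct A) (p : ℕ) : Prop :=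
  ∀ (V : Type) (I : Instance A V), IsCSPInstance 𝔸 I → ¬I.Satisfiable →
    ∃ (W : Type) (J : Instance A W) (h : W → V),
      IsCSPInstance 𝔸 J ∧ ¬J.Satisfiable ∧ PathwidthLE J p ∧
      ∀ c ∈ J.constraints,
        (⟨c.1, fun i => h (c.2.1 i), c.2.2⟩ :
          Σ n : ℕ, (Fin n → V) × Set (Fin n → A)) ∈ I.constraints

/-- The `k`-th bubble power `𝔸^(k)` of `𝔸`: the relational structure on `A^k`
whose basic relations are all unary relations definable as conjunctions of
basic relations of `𝔸` (with identification of variables and dummy variables,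
but no existential quantification), and all binary relations
`E_ℐ = {(a, b) | ∀ (i,j) ∈ ℐ, a i = b j}` for `ℐ ⊆ [k]²`. -/
def bubblePower {A : Type} (𝔸 : RelStruct A) (k : ℕ) : RelStruct (Fin k → A) where
  basic :=
    {r | (∃ L : Set (Σ n : ℕ, (Fin n → Fin k) × Set (Fin n → A)),
            (∀ c ∈ L, (⟨c.1, c.2.2⟩ : Σ n : ℕ, Set (Fin n → A)) ∈ 𝔸.basic) ∧
            r = ⟨1, {f : Fin 1 → (Fin k → A) |
                      ∀ c ∈ L, (fun i => f 0 (c.2.1 i)) ∈ c.2.2}⟩) ∨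
         (∃ Idx : Set (Fin k × Fin k),
            r = ⟨2, {f : Fin 2 → (Fin k → A) | ∀ q ∈ Idx, f 0 q.1 = f 1 q.2}⟩)}

/-!
Suppose `I_{[a,b]}` is subdirect. Then each backward edge at `j` lies on a solution `ρ_j` of
`I_{[a,b]}` with `ρ_j j ∉ C_j` and `ρ_j (j+1) ∈ C_{j+1}`. Colour increasing 5-tuples
`j₀ < … < j₄` of backward indices by whether `ρ_{j₀}, ρ_{j₁}` agree at `j₂` and whether
`ρ_{j₃}, ρ_{j₄}` agree at `j₂`. Since `|B_i| ≤ N`, Ramsey's theorem and the pigeonhole principle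
give a long increasing sequence `f` of backward indices along which, for `i < j < k`, the rows
`ρ_{f i}, ρ_{f j}` agree at column `f k` and the rows `ρ_{f j}, ρ_{f k}` agree at column `f i`.
Interleaving rows and columns of `f` yields a braid of `n + 1` solutions whose first member
starts in `C_a` and whose last one ends outside `C_q`. The Hagemann–Mitschke terms fuse a braid
into one solution from its first start to its last end, and membership in the sets `C_i`
propagates along solutions: a contradiction.
-/

section Ramsey

variable {κ : Type*}

open Finset

def IsHomogeneous {r : ℕ} (col : (Fin r → ℕ) → κ) (H : Finset ℕ) : Prop :=
  ∃ c, ∀ q : Fin r → ℕ, StrictMono q → (∀ i, q i ∈ H) → col q = c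

theorem exists_headDetermined_of_le_card {r : ℕ}
    (ih : ∀ k, ∃ R, ∀ (col : (Fin r → ℕ) → κ) (S : Finset ℕ), R ≤ #S →
      ∃ H ⊆ S, k ≤ #H ∧ IsHomogeneous col H) (M : ℕ) :
    ∃ R, ∀ (col : (Fin (r + 1) → ℕ) → κ) (S : Finset ℕ), R ≤ #S →
      ∃ X ⊆ S, M ≤ #X ∧ ∃ tag : ℕ → κ,
        ∀ q : Fin (r + 1) → ℕ, StrictMono q → (∀ i, q i ∈ X) → col q = tag (q 0) := by
  induction M with
  | zero =>
    exact ⟨0, fun col _ _ => ⟨∅, empty_subset _, le_rfl, fun _ => col 0,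
      fun q _ hq => absurd (hq 0) (notMem_empty _)⟩⟩
  | succ M ihM =>
    obtain ⟨R₁, hR₁⟩ := ihM
    obtain ⟨R₂, hR₂⟩ := ih R₁
    refine ⟨R₂ + 1, fun col S hS => ?_⟩
    have hne : S.Nonempty := card_pos.1 (by omega)
    set x := S.min' hne
    obtain ⟨H, hHS, hH, c, hc⟩ := hR₂ (fun q => col (Fin.cons x q)) (S.erase x)
      (by rw [card_erase_of_mem (min'_mem S hne)]; omega)
    obtain ⟨X, hXH, hX, tag, htag⟩ := hR₁ col H hH
    have hxX : ∀ y ∈ X, x < y := fun y hy => S.min'_lt_of_mem_erase_min' hne (hHS (hXH hy))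
    refine ⟨insert x X, insert_subset (min'_mem S hne) ((hXH.trans hHS).trans (erase_subset _ _)),
      ?_, Function.update tag x c, fun q hq hqX => ?_⟩
    · rw [card_insert_of_notMem fun h => (hxX x h).false]
      omega
    have hge : ∀ i, x ≤ q i := fun i => by
      rcases mem_insert.1 (hqX i) with h | h
      · exact h.ge
      · exact (hxX _ h).le
    have htail : ∀ i : Fin r, q i.succ ∈ X := fun i =>
      (mem_insert.1 (hqX i.succ)).resolve_left ((hge 0).trans_lt (hq (Fin.succ_pos i))).ne'
    by_cases h0 : q 0 = x
    · rw [h0, Function.update_self, ← Fin.cons_self_tail q, h0]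
      exact hc _ (hq.comp Fin.strictMono_succ) fun i => hXH (htail i)
    · rw [Function.update_of_ne h0]
      exact htag q hq (Fin.cases ((mem_insert.1 (hqX 0)).resolve_left h0) htail)

theorem exists_isHomogeneous_of_le_card [Finite κ] :
    ∀ r k : ℕ, ∃ R, ∀ (col : (Fin r → ℕ) → κ) (S : Finset ℕ), R ≤ #S →
      ∃ H ⊆ S, k ≤ #H ∧ IsHomogeneous col H
  | 0, k => ⟨k, fun col S hS =>
      ⟨S, subset_rfl, hS, col 0, fun q _ _ => congrArg col (Subsingleton.elim _ _)⟩⟩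
  | r + 1, k => by
    classical
    have := Fintype.ofFinite κ
    obtain ⟨R, hR⟩ :=
      exists_headDetermined_of_le_card (exists_isHomogeneous_of_le_card r) (Fintype.card κ * k + 1)
    refine ⟨R, fun col S hS => ?_⟩
    obtain ⟨X, hXS, hX, tag, htag⟩ := hR col S hS
    obtain ⟨c, -, hc⟩ := exists_lt_card_fiber_of_mul_lt_card_of_maps_to (s := X) (t := univ)
      (n := k) (fun x _ => mem_univ (tag x)) (by rw [card_univ]; omega)
    exact ⟨X.filter (tag · = c), (filter_subset _ _).trans hXS, hc.le, c, fun q hq hqH =>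
      (htag q hq fun i => (mem_filter.1 (hqH i)).1).trans (mem_filter.1 (hqH 0)).2⟩

end Ramsey

section PathInstance

variable {A : Type} {I : PathInstance A}

theorem IsSolutionOn.mono {a a' q q' : ℕ} {s : ℕ → A} (h : IsSolutionOn I a q s)
    (ha : a ≤ a') (hq : q' ≤ q) : IsSolutionOn I a' q' s :=
  ⟨fun i h₁ h₂ => h.1 i (ha.trans h₁) (h₂.trans hq),
    fun i h₁ h₂ => h.2 i (ha.trans h₁) (h₂.trans hq)⟩

theorem isSolutionOn_const {j : ℕ} {y : A} (hy : y ∈ I.B j) :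
    IsSolutionOn I j j (fun _ => y) :=
  ⟨fun _ h₁ h₂ => le_antisymm h₂ h₁ ▸ hy, fun _ h₁ h₂ => by omega⟩

theorem IsSolutionOn.piecewise {a c q : ℕ} {g h : ℕ → A} (hg : IsSolutionOn I a c g)
    (hh : IsSolutionOn I (c + 1) q h) (hgh : c + 1 ≤ q → (g c, h (c + 1)) ∈ I.E c) :
    IsSolutionOn I a q (fun i => if i ≤ c then g i else h i) := by
  refine ⟨fun i h₁ h₂ => ?_, fun i h₁ h₂ => ?_⟩
  · dsimp only
    split_ifs with hi
    · exact hg.1 i h₁ hi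
    · exact hh.1 i (by omega) h₂
  · rcases lt_trichotomy i c with hi | rfl | hi
    · simpa [hi.le, show i + 1 ≤ c by omega] using hg.2 i h₁ hi
    · simpa using hgh h₂
    · simpa [show ¬i ≤ c by omega, show ¬i + 1 ≤ c by omega] using hh.2 i hi h₂

theorem IsSolutionOn.map₃ {a q : ℕ} {f : A → A → A → A}
    (hB : ∀ i, a ≤ i → i ≤ q → Pres3Set f (I.B i))
    (hE : ∀ i, a ≤ i → i + 1 ≤ q → Pres3Rel f (I.E i)) {s₁ s₂ s₃ : ℕ → A}
    (h₁ : IsSolutionOn I a q s₁) (h₂ : IsSolutionOn I a q s₂) (h₃ : IsSolutionOn I a q s₃) :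
    IsSolutionOn I a q (fun i => f (s₁ i) (s₂ i) (s₃ i)) :=
  ⟨fun i hi hi' => hB i hi hi' _ _ _ (h₁.1 i hi hi') (h₂.1 i hi hi') (h₃.1 i hi hi'),
    fun i hi hi' => hE i hi hi' (s₁ i, s₁ (i + 1)) (s₂ i, s₂ (i + 1)) (s₃ i, s₃ (i + 1))
      (h₁.2 i hi hi') (h₂.2 i hi hi') (h₃.2 i hi hi')⟩

theorem reachSet_subset : ∀ i, reachSet I i ⊆ I.B i
  | 0 => Set.empty_subset _
  | 1 => subset_rfl
  | _ + 2 => fun _ hy => hy.1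

theorem mem_reachSet_succ_iff {i : ℕ} (hi : 1 ≤ i) {y : A} :
    y ∈ reachSet I (i + 1) ↔ y ∈ I.B (i + 1) ∧ ∃ x ∈ reachSet I i, (x, y) ∈ I.E i := by
  obtain ⟨k, rfl⟩ : ∃ k, i = k + 1 := ⟨i - 1, by omega⟩
  rfl

theorem BackwardAt.nontrivial {j : ℕ} (h : BackwardAt I j) : Nontrivial A := by
  obtain ⟨hj, -, x, y, -, -, hx, hy⟩ := h
  obtain ⟨-, x', hx', -⟩ := (mem_reachSet_succ_iff hj).1 hy
  exact ⟨x, x', fun h => hx (h ▸ hx')⟩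

theorem IsSolutionOn.mem_reachSet {a q : ℕ} {u : ℕ → A} (hu : IsSolutionOn I a q u)
    (ha : 1 ≤ a) (haq : a ≤ q) (hua : u a ∈ reachSet I a) : u q ∈ reachSet I q := by
  induction q, haq using Nat.le_induction with
  | base => exact hua
  | succ q hq ih =>
    exact (mem_reachSet_succ_iff (by omega)).2
      ⟨hu.1 _ (by omega) le_rfl, u q, ih (hu.mono le_rfl q.le_succ), hu.2 q hq le_rfl⟩

theorem exists_isSolutionOn_of_mem_reachSet {a p : ℕ} (ha : 1 ≤ a) (hap : a ≤ p) {y : A}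
    (hy : y ∈ reachSet I p) :
    ∃ g : ℕ → A, IsSolutionOn I a p g ∧ g p = y ∧ g a ∈ reachSet I a := by
  induction p, hap using Nat.le_induction generalizing y with
  | base => exact ⟨fun _ => y, isSolutionOn_const (reachSet_subset _ hy), rfl, hy⟩
  | succ p hp ih =>
    obtain ⟨hyB, x, hx, hxy⟩ := (mem_reachSet_succ_iff (by omega)).1 hy
    obtain ⟨g, hg, rfl, hga⟩ := ih hx
    exact ⟨_, hg.piecewise (isSolutionOn_const hyB) fun _ => hxy, by simp, by simpa [hp]⟩

theorem IsSolutionOn.exists_start_mem_reachSet {a b j : ℕ} {ρ : ℕ → A}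
    (hρ : IsSolutionOn I a b ρ) (ha : 1 ≤ a) (haj : a ≤ j)
    (hj : ρ (j + 1) ∈ reachSet I (j + 1)) :
    ∃ ρ' : ℕ → A, IsSolutionOn I a b ρ' ∧ ρ' a ∈ reachSet I a ∧ ∀ i, j < i → ρ' i = ρ i := by
  obtain ⟨γ, hγ, hγj, hγa⟩ := exists_isSolutionOn_of_mem_reachSet ha (by omega) hj
  refine ⟨_, (hγ.mono le_rfl j.le_succ).piecewise (hρ.mono (by omega) le_rfl)
    fun _ => hγj ▸ hγ.2 j haj le_rfl, by simpa [haj], fun i hi => if_neg (by omega)⟩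

theorem SubdirectOn.mono {a a' b b' : ℕ} (h : SubdirectOn I a b) (ha : a ≤ a') (hb : b' ≤ b) :
    SubdirectOn I a' b' :=
  fun i h₁ h₂ => h i (ha.trans h₁) (h₂.trans hb)

theorem SubdirectOn.exists_isSolutionOn_from {a b j : ℕ} (h : SubdirectOn I a b) (haj : a ≤ j)
    (hjb : j ≤ b) {y : A} (hy : y ∈ I.B j) : ∃ s : ℕ → A, IsSolutionOn I j b s ∧ s j = y := by
  induction b, hjb using Nat.le_induction with
  | base => exact ⟨_, isSolutionOn_const hy, rfl⟩
  | succ b hb ih =>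
    obtain ⟨s, hs, hsj⟩ := ih (h.mono le_rfl b.le_succ)
    obtain ⟨z, hz, hsz⟩ := (h b (by omega) le_rfl).2.2.1 (s b) (hs.1 b hb le_rfl)
    exact ⟨_, hs.piecewise (isSolutionOn_const hz) fun _ => hsz, by simpa [hb]⟩

theorem SubdirectOn.exists_isSolutionOn_to {a b j : ℕ} (h : SubdirectOn I a b) (haj : a ≤ j)
    (hjb : j ≤ b) {x : A} (hx : x ∈ I.B j) : ∃ s : ℕ → A, IsSolutionOn I a j s ∧ s j = x := by
  induction haj using Nat.decreasingInduction with
  | self => exact ⟨_, isSolutionOn_const hx, rfl⟩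
  | of_succ a ha ih =>
    obtain ⟨s, hs, hsj⟩ := ih (h.mono a.le_succ le_rfl)
    obtain ⟨w, hw, hws⟩ := (h a le_rfl (by omega)).2.2.2 (s (a + 1)) (hs.1 _ le_rfl ha)
    exact ⟨_, (isSolutionOn_const hw).piecewise hs fun _ => hws,
      by simpa [show ¬j ≤ a by omega]⟩

theorem SubdirectOn.exists_isSolutionOn_of_backwardAt {a b j : ℕ} (h : SubdirectOn I a b)
    (haj : a ≤ j) (hjb : j < b) (hj : BackwardAt I j) :
    ∃ ρ : ℕ → A, IsSolutionOn I a b ρ ∧ ρ j ∉ reachSet I j ∧ ρ (j + 1) ∈ reachSet I (j + 1) := by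
  obtain ⟨-, -, x, y, hxy, hx, hxC, hyC⟩ := hj
  obtain ⟨π, hπ, rfl⟩ := h.exists_isSolutionOn_to haj hjb.le hx
  obtain ⟨σ, hσ, rfl⟩ := h.exists_isSolutionOn_from (by omega) hjb (reachSet_subset _ hyC)
  exact ⟨_, hπ.piecewise hσ fun _ => hxy, by simpa using hxC, by simpa using hyC⟩

theorem SubdirectOn.exists_forall_backwardAt_isSolutionOn {a b : ℕ} (h : SubdirectOn I a b)
    (hab : a < b) :
    ∃ ρ : ℕ → ℕ → A, ∀ j, a ≤ j ∧ j < b ∧ BackwardAt I j →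
      IsSolutionOn I a b (ρ j) ∧ ρ j j ∉ reachSet I j ∧ ρ j (j + 1) ∈ reachSet I (j + 1) := by
  have : Nonempty A := ⟨(h a le_rfl hab).1.some⟩
  choose! ρ hρ using fun j (hj : a ≤ j ∧ j < b ∧ BackwardAt I j) =>
    h.exists_isSolutionOn_of_backwardAt hj.1 hj.2.1 hj.2.2
  exact ⟨ρ, hρ⟩

end PathInstance

section Braid

variable {A : Type} {I : PathInstance A}

theorem exists_isSolutionOn_of_chain {a : ℕ} {W : ℕ → ℕ → A} {c : ℕ → ℕ} :
    ∀ n q : ℕ, a ≤ q → (∀ t ≤ n, IsSolutionOn I a q (W t)) → MonotoneOn c (Set.Icc 1 n) →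
      Set.MapsTo c (Set.Icc 1 n) (Set.Icc a q) →
      (∀ t ∈ Set.Icc 1 n, W (t - 1) (c t) = W t (c t)) →
      ∃ u : ℕ → A, IsSolutionOn I a q u ∧ u a = W 0 a ∧ u q = W n q
  | 0, _, _, hW, _, _, _ => ⟨W 0, hW 0 le_rfl, rfl, rfl⟩
  | n + 1, q, _, hW, hmono, hmaps, hmeet => by
    have hn : n + 1 ∈ Set.Icc 1 (n + 1) := ⟨le_add_self, le_rfl⟩
    obtain ⟨hac, hcq⟩ := hmaps hn
    have hlast : W n (c (n + 1)) = W (n + 1) (c (n + 1)) := hmeet (n + 1) hn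
    -- glue the first `n` solutions on `[a, c (n+1)]`, then switch to `W (n+1)`
    obtain ⟨u, hu, hua, huc⟩ := exists_isSolutionOn_of_chain n (c (n + 1)) hac
      (fun t ht => (hW t (by omega)).mono le_rfl hcq)
      (hmono.mono (Set.Icc_subset_Icc_right n.le_succ))
      (fun t ⟨ht₁, htₙ⟩ => ⟨(hmaps ⟨ht₁, by omega⟩).1, hmono ⟨ht₁, by omega⟩ hn (by omega)⟩)
      (fun t ⟨ht₁, htₙ⟩ => hmeet t ⟨ht₁, by omega⟩)
    refine ⟨_, hu.piecewise ((hW (n + 1) le_rfl).mono (by omega) le_rfl) fun h => ?_,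
      by simpa [hac], ?_⟩
    · rw [huc, hlast]
      exact (hW (n + 1) le_rfl).2 _ (by omega) h
    · split_ifs with h
      · rw [le_antisymm h hcq, huc, hlast]
      · rfl

theorem IsHMChain.subsingleton {p : ℕ → A → A → A → A} (hp : IsHMChain 0 p) : Subsingleton A :=
  ⟨fun x y => (hp.2.1 x x y).symm.trans (hp.2.2.1 x x y)⟩

/-- `IsBraid` for the subinstance `I_{[a,q]}`, with weakly increasing positions `c 1, …, c n`. -/
structure IsBraidOn (I : PathInstance A) (a q n : ℕ) (s : ℕ → ℕ → A) (c : ℕ → ℕ) : Prop where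
  isSolutionOn : ∀ t ≤ n, IsSolutionOn I a q (s t)
  monotoneOn : MonotoneOn c (Set.Icc 1 n)
  mapsTo : Set.MapsTo c (Set.Icc 1 n) (Set.Icc a q)
  eq_succ : ∀ k ∈ Set.Ico 1 n, s k (c k) = s (k + 1) (c k)
  eq_pred : ∀ k ∈ Set.Ico 1 n, s (k - 1) (c (k + 1)) = s k (c (k + 1))

theorem IsBraidOn.mem_reachSet {a q n : ℕ} {s : ℕ → ℕ → A} {c : ℕ → ℕ}
    {p : ℕ → A → A → A → A} (hp : IsHMChain n p)
    (hB : ∀ k ≤ n, ∀ i, a ≤ i → i ≤ q → Pres3Set (p k) (I.B i))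
    (hE : ∀ k ≤ n, ∀ i, a ≤ i → i + 1 ≤ q → Pres3Rel (p k) (I.E i))
    (ha : 1 ≤ a) (haq : a ≤ q) (hs : IsBraidOn I a q n s c) (h₀ : s 0 a ∈ reachSet I a) :
    s n q ∈ reachSet I q := by
  obtain ⟨-, hp₀, hpₙ, hpk⟩ := hp
  -- `W t` interpolates between `s (t-1)`, `s t`, `s (t+1)`; the Hagemann–Mitschke identities
  -- make consecutive `W`s meet at the braid positions
  set W : ℕ → ℕ → A := fun t i => p t (s (t - 1) i) (s t i) (s (min (t + 1) n) i)
  have hW : ∀ t ≤ n, IsSolutionOn I a q (W t) := fun t ht =>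
    IsSolutionOn.map₃ (hB t ht) (hE t ht) (hs.isSolutionOn _ (by omega))
      (hs.isSolutionOn t ht) (hs.isSolutionOn _ (min_le_right _ _))
  have hmeet : ∀ t ∈ Set.Icc 1 n, W (t - 1) (c t) = W t (c t) := by
    rintro t ⟨ht₁, htₙ⟩
    obtain ⟨k, rfl⟩ : ∃ k, t = k + 1 := ⟨t - 1, by omega⟩
    have hl : s (k - 1) (c (k + 1)) = s k (c (k + 1)) := by
      rcases Nat.eq_zero_or_pos k with rfl | hk
      · rfl
      · exact hs.eq_pred k ⟨hk, by omega⟩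
    have hr : s (min (k + 1 + 1) n) (c (k + 1)) = s (k + 1) (c (k + 1)) := by
      rcases htₙ.lt_or_eq with h | rfl
      · rw [min_eq_left h]
        exact (hs.eq_succ (k + 1) ⟨ht₁, h⟩).symm
      · rw [min_eq_right (Nat.le_succ _)]
    simp only [W, Nat.add_sub_cancel, min_eq_left htₙ, hl, hr]
    exact hpk k (by omega) _ _
  obtain ⟨u, hu, hua, huq⟩ :=
    exists_isSolutionOn_of_chain n q haq hW hs.monotoneOn hs.mapsTo hmeet
  have hun : u q = s n q := by rw [huq]; simp [W, hpₙ]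
  exact hun ▸ hu.mem_reachSet ha haq (by rw [hua]; simpa [W, hp₀] using h₀)

end Braid

theorem exists_lt_map_eq_of_encard_lt {A : Type*} {T : Set A} {g : ℕ → A} {l u : ℕ}
    (hg : ∀ i, l ≤ i → i < u → g i ∈ T) (hT : T.encard < (u - l : ℕ)) :
    ∃ i j, l ≤ i ∧ i < j ∧ j < u ∧ g i = g j := by
  obtain ⟨i, hi, j, hj, hij, heq⟩ := Set.exists_ne_map_eq_of_encard_lt_of_maps_to
    (s := Set.Ico l u) (by rwa [← Finset.coe_Ico, Set.encard_coe_eq_coe_finsetCard, Nat.card_Ico])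
    fun i hi => hg i hi.1 hi.2
  rcases hij.lt_or_gt with h | h
  · exact ⟨i, j, hi.1, h, hj.2, heq⟩
  · exact ⟨j, i, hj.1, h, hi.2, heq.symm⟩

open Finset in
theorem exists_agreeing_sequence (N K : ℕ) :
    ∃ R, ∀ {A : Type} (T : ℕ → Set A) (ρ : ℕ → ℕ → A) (S : Finset ℕ), R ≤ #S →
      (∀ i ∈ S, (T i).encard ≤ N) → (∀ j ∈ S, ∀ i ∈ S, ρ j i ∈ T i) →
      ∃ f : ℕ → ℕ, StrictMonoOn f (Set.Iio K) ∧ (∀ i < K, f i ∈ S) ∧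
        (∀ i j k, i < j → j < k → k < K → ρ (f i) (f k) = ρ (f j) (f k)) ∧
        (∀ i j k, i < j → j < k → k < K → ρ (f j) (f i) = ρ (f k) (f i)) := by
  obtain ⟨R, hR⟩ := exists_isHomogeneous_of_le_card (κ := Prop × Prop) 5 (max K N + 4)
  refine ⟨R, fun T ρ S hS hT hρ => ?_⟩
  obtain ⟨H, hHS, hH, c, hc⟩ :=
    hR (fun v => (ρ (v 0) (v 2) = ρ (v 1) (v 2), ρ (v 3) (v 2) = ρ (v 4) (v 2))) S hS
  set L := #H
  set e := Nat.nth (· ∈ H)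
  have he : ∀ {i j}, i < j → j < L → e i < e j := fun hij hj =>
    Nat.nth_strictMonoOn (p := (· ∈ H)) H.finite_toSet (by simp; omega) (by simpa using hj) hij
  have heS : ∀ i < L, e i ∈ S := fun i hi =>
    hHS (Nat.nth_mem_of_lt_card H.finite_toSet (by simpa using hi))
  have hcol : ∀ i₀ i₁ i₂ i₃ i₄, i₀ < i₁ → i₁ < i₂ → i₂ < i₃ → i₃ < i₄ → i₄ < L →
      ((ρ (e i₀) (e i₂) = ρ (e i₁) (e i₂)) ↔ c.1) ∧
        ((ρ (e i₃) (e i₂) = ρ (e i₄) (e i₂)) ↔ c.2) := by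
    intro i₀ i₁ i₂ i₃ i₄ h₀ h₁ h₂ h₃ h₄
    rw [← hc ![e i₀, e i₁, e i₂, e i₃, e i₄]
      (by simp [strictMono_vecCons, he h₀ (by omega), he h₁ (by omega), he h₂ (by omega),
        he h₃ h₄])
      (fun k => by fin_cases k <;> exact Nat.nth_mem_of_lt_card H.finite_toSet (by simp; omega))]
    exact ⟨Iff.rfl, Iff.rfl⟩
  -- by pigeonhole, `T` is too small to hold the values of all rows at one column
  have hc₁ : c.1 := by
    obtain ⟨i, j, -, hij, hj, heq⟩ := exists_lt_map_eq_of_encard_lt (l := 0) (u := L - 3)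
      (g := fun i => ρ (e i) (e (L - 3)))
      (fun i _ hi => hρ _ (heS i (by omega)) _ (heS _ (by omega)))
      ((hT _ (heS _ (by omega))).trans_lt (by norm_cast; omega))
    exact (hcol i j (L - 3) (L - 2) (L - 1) hij hj (by omega) (by omega) (by omega)).1.1 heq
  have hc₂ : c.2 := by
    obtain ⟨i, j, hi, hij, hj, heq⟩ := exists_lt_map_eq_of_encard_lt (l := 3) (u := L)
      (g := fun i => ρ (e i) (e 2)) (fun i _ hi => hρ _ (heS i hi) _ (heS _ (by omega)))
      ((hT _ (heS _ (by omega))).trans_lt (by norm_cast; omega))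
    exact (hcol 0 1 2 i j (by omega) (by omega) (by omega) hij hj).2.1 heq
  -- the first two elements of `H` only pad the tuples that test the second colour
  refine ⟨fun i => e (i + 2), fun i hi j hj hij => he (by omega) (by simp at hj; omega),
    fun i hi => heS _ (by omega), fun i j k hij hjk hk => ?_, fun i j k hij hjk hk => ?_⟩
  · exact (hcol (i + 2) (j + 2) (k + 2) (k + 3) (k + 4) (by omega) (by omega) (by omega)
      (by omega) (by omega)).1.2 hc₁
  · exact (hcol 0 1 (i + 2) (j + 2) (k + 2) (by omega) (by omega) (by omega) (by omega)
      (by omega)).2.2 hc₂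

theorem isBraidOn_of_agreeing {A : Type} {I : PathInstance A} {a b n : ℕ} {ρ : ℕ → ℕ → A}
    {ρ₀ : ℕ → A} {f : ℕ → ℕ} (hf : StrictMonoOn f (Set.Iio (2 * n + 2)))
    (hρ : ∀ i < 2 * n + 2, IsSolutionOn I a b (ρ (f i))) (hρ₀ : IsSolutionOn I a b ρ₀)
    (hρ₀f : ∀ i, f 1 < i → ρ₀ i = ρ (f 1) i) (hfa : a ≤ f 0) (hfb : f (2 * n + 1) ≤ b)
    (h₁ : ∀ i j k, i < j → j < k → k < 2 * n + 2 → ρ (f i) (f k) = ρ (f j) (f k))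
    (h₂ : ∀ i j k, i < j → j < k → k < 2 * n + 2 → ρ (f j) (f i) = ρ (f k) (f i)) :
    IsBraidOn I a (f (2 * n + 1)) n (fun t => if t = 0 then ρ₀ else ρ (f (2 * t + 1)))
      (fun t => f (2 * t)) := by
  have hlt : ∀ {i j}, i < j → j < 2 * n + 2 → f i < f j := fun hij hj =>
    hf (show _ < 2 * n + 2 by omega) hj hij
  have hle : ∀ {i j}, i ≤ j → j < 2 * n + 2 → f i ≤ f j := fun hij hj =>
    hf.monotoneOn (show _ < 2 * n + 2 by omega) hj hij
  have hs : ∀ t ≤ n, ∀ i, f (2 * t + 1) < i →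
      (if t = 0 then ρ₀ else ρ (f (2 * t + 1))) i = ρ (f (2 * t + 1)) i := by
    intro t _ i hi
    split_ifs with ht
    · subst ht
      exact hρ₀f i hi
    · rfl
  refine ⟨fun t ht => ?_, fun t ht t' ht' htt' => hle (by omega) (by have := ht'.2; omega),
    fun t ⟨ht₁, htₙ⟩ => ⟨hfa.trans (hle (by omega) (by omega)), hle (by omega) (by omega)⟩,
    fun k ⟨hk₁, hkₙ⟩ => ?_, fun k ⟨hk₁, hkₙ⟩ => ?_⟩
  · split_ifs
    · exact hρ₀.mono le_rfl hfb
    · exact (hρ _ (by omega)).mono le_rfl hfb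
  · simp only [show k ≠ 0 by omega, show k + 1 ≠ 0 by omega, if_false]
    exact h₂ (2 * k) (2 * k + 1) (2 * (k + 1) + 1) (by omega) (by omega) (by omega)
  · rw [hs (k - 1) (by omega) _ (hlt (by omega) (by omega)),
      hs k (by omega) _ (hlt (by omega) (by omega))]
    exact h₁ _ _ _ (by omega) (by omega) (by omega)

/-- many backward edges destroy subdirectness.
For every `n` and `N` there is an `m` such that: if `I` is a path instance over
a finite set, `1 < a < b < len`, each `B_i` has at most `N` elements, all
constraint relations are invariant under a chain of `n` Hagemann–Mitschke
terms, and at least `m` indices `j ∈ [a, b)` are such that `B_{j,j+1}` contains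
a backward edge, then `I_{[a,b]}` is not subdirect. -/
theorem statement8 (n N : ℕ) :
    ∃ m : ℕ, ∀ (A : Type), Finite A → ∀ (I : PathInstance A) (a b : ℕ),
      1 < a → a < b → b < I.len →
      (∀ i, 1 ≤ i → i ≤ I.len → (I.B i).ncard ≤ N) →
      (∃ p : ℕ → A → A → A → A, IsHMChain n p ∧
        (∀ k ≤ n, ∀ i, 1 ≤ i → i ≤ I.len → Pres3Set (p k) (I.B i)) ∧
        (∀ k ≤ n, ∀ i, 1 ≤ i → i + 1 ≤ I.len → Pres3Rel (p k) (I.E i))) →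
      m ≤ {j | a ≤ j ∧ j < b ∧ BackwardAt I j}.ncard →
      ¬SubdirectOn I a b := by
  obtain ⟨R, hR⟩ := exists_agreeing_sequence N (2 * n + 2)
  refine ⟨R, fun A _ I a b ha hab hb hN ⟨p, hp, hPB, hPE⟩ hm hsub => ?_⟩
  have hJ : {j | a ≤ j ∧ j < b ∧ BackwardAt I j}.Finite :=
    (Set.finite_Ico a b).subset fun j hj => ⟨hj.1, hj.2.1⟩
  obtain ⟨ρ, hρ⟩ := hsub.exists_forall_backwardAt_isSolutionOn hab
  obtain ⟨f, hf, hfS, h₁, h₂⟩ := hR I.B ρ hJ.toFinset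
    (by rwa [← Set.ncard_eq_toFinset_card _ hJ])
    (fun i hi => by
      obtain ⟨hai, hib, -⟩ := hJ.mem_toFinset.1 hi
      rw [← (Set.toFinite _).cast_ncard_eq]
      exact_mod_cast hN i (by omega) (by omega))
    (fun j hj i hi => (hρ j (hJ.mem_toFinset.1 hj)).1.1 i (hJ.mem_toFinset.1 hi).1
      (hJ.mem_toFinset.1 hi).2.1.le)
  have hfJ : ∀ i < 2 * n + 2, a ≤ f i ∧ f i < b ∧ BackwardAt I (f i) := fun i hi =>
    hJ.mem_toFinset.1 (hfS i hi)
  rcases Nat.eq_zero_or_pos n with rfl | hn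
  · have := hp.subsingleton
    have := (hfJ 0 (by omega)).2.2.nontrivial
    exact false_of_nontrivial_of_subsingleton A
  obtain ⟨ρ₀, hρ₀, hρ₀a, hρ₀f⟩ := (hρ _ (hfJ 1 (by omega))).1.exists_start_mem_reachSet
    (by omega) (hfJ 1 (by omega)).1 (hρ _ (hfJ 1 (by omega))).2.2
  obtain ⟨hqa, hqb, -⟩ := hfJ (2 * n + 1) (by omega)
  have hbraid := isBraidOn_of_agreeing hf (fun i hi => (hρ _ (hfJ i hi)).1) hρ₀ hρ₀f
    (hfJ 0 (by omega)).1 hqb.le h₁ h₂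
  have hC := hbraid.mem_reachSet hp (fun k hk i hi hi' => hPB k hk i (by omega) (by omega))
    (fun k hk i hi hi' => hPE k hk i (by omega) (by omega)) (by omega) hqa (by simpa using hρ₀a)
  exact (hρ _ (hfJ (2 * n + 1) (by omega))).2.1 (by simpa [hn.ne'] using hC)

end CSPPaper
end

section
/- For every relational structure 𝔸, every path instance I of CSP(𝔸), and every i ≤ j, we have 𝒫_𝔸^3(I) ⊢ λ_{I,i,j}(i, j). -/
namespace CSPPaper

/-- Auxiliary relation: pairs `(a, c)` with `a ∈ B i`, `c ∈ B l`, such that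
`(i, a)` and `(l, c)` are connected in `Conn(I_[i,j])`. For `l = j` this is
exactly `lamRel I i j`. -/
def Wrel {A : Type} (I : PathInstance A) (i j l : ℕ) : Set (A × A) :=
  {ab | ab.1 ∈ I.B i ∧ ab.2 ∈ I.B l ∧
    Relation.ReflTransGen (fun p q => connAdj I i j p q ∨ connAdj I i j q p)
      (i, ab.1) (l, ab.2)}

lemma derives_congr {A V : Type} {𝔸 : RelStruct A} {r : ℕ} {I : Instance A V} {n : ℕ}
    {ρ ρ' : Fin n → V} {R : Set (Fin n → A)} (h : ρ = ρ')
    (hd : Derives 𝔸 r I ρ R) : Derives 𝔸 r I ρ' R := h ▸ hd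

lemma unary_mem {A : Type} (I : PathInstance A) {l : ℕ} (h1 : 1 ≤ l) (h2 : l ≤ I.len) :
    (⟨1, fun _ => l, unaryRel (I.B l)⟩ :
      Σ n : ℕ, (Fin n → ℕ) × Set (Fin n → A)) ∈ I.toInstance.constraints :=
  Or.inl ⟨l, h1, h2, rfl⟩

lemma binary_mem {A : Type} (I : PathInstance A) {l : ℕ} (h1 : 1 ≤ l) (h2 : l + 1 ≤ I.len) :
    (⟨2, ![l, l + 1], pairRel (I.E l)⟩ :
      Σ n : ℕ, (Fin n → ℕ) × Set (Fin n → A)) ∈ I.toInstance.constraints :=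
  Or.inr ⟨l, h1, h2, rfl⟩

lemma main_aux {A : Type} (𝔸 : RelStruct A) (I : PathInstance A)
    (hI : IsCSPInstance 𝔸 I.toInstance) (i j : ℕ) (h1 : 1 ≤ i) (hj : j ≤ I.len) :
    ∀ l, i ≤ l → l ≤ j → Derives 𝔸 3 I.toInstance ![i, l] (pairRel (Wrel I i j l)) := by
  intro l hl
  induction l, hl using Nat.le_induction with
  | base =>
    intro hij
    have hcon := unary_mem I h1 (le_trans hij hj)
    have hbasic := hI _ hcon
    set rule : Rule A 𝔸 3 :=
      { head := ⟨2, fun _ => 0, pairRel (Wrel I i j i)⟩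
        idb := some ⟨1, fun _ => 0, unaryRel (I.B i)⟩
        edb := []
        head_arity := by norm_num
        idb_arity := by
          intro a ha
          simp only [Option.mem_def, Option.some_inj] at ha
          subst ha; norm_num
        edb_arity := by intro a ha; simp at ha
        edb_basic := by intro a ha; simp at ha
        nodup := List.nodup_nil
        consistent := by
          intro f hidb _
          have h : f 0 ∈ I.B i := hidb _ rfl
          exact ⟨h, h, Relation.ReflTransGen.refl⟩
        mirror := by
          intro a ha f hhead _
          simp only [Option.mem_def, Option.some_inj] at ha
          subst ha
          have hh : (f 0, f 0) ∈ Wrel I i j i := hhead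
          exact hh.1 }
    have hstep := Derives.step (𝔸 := 𝔸) (r := 3) (I := I.toInstance) rule
      (fun _ => i)
      (by
        intro a ha
        simp only [rule, Option.mem_def, Option.some_inj] at ha
        subst ha
        exact Derives.base _ _ hcon)
      (by intro a ha; simp [rule] at ha)
    refine derives_congr ?_ hstep
    funext k; fin_cases k <;> rfl
  | succ l hil IH =>
    intro hlj
    have hlj' : l ≤ j := Nat.le_of_succ_le hlj
    have hl1 : 1 ≤ l := le_trans h1 hil
    have hllen : l ≤ I.len := le_trans hlj' hj
    have hl1len : l + 1 ≤ I.len := le_trans hlj hj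
    have hconB1 := unary_mem I hl1 hllen
    have hconB2 := unary_mem I (Nat.le_succ_of_le hl1) hl1len
    have hconE := binary_mem I hl1 hl1len
    set A1 : Atom A 3 := ⟨1, fun _ => 1, unaryRel (I.B l)⟩ with hA1
    set A2 : Atom A 3 := ⟨1, fun _ => 2, unaryRel (I.B (l + 1))⟩ with hA2
    set A3 : Atom A 3 := ⟨2, ![1, 2], pairRel (I.E l)⟩ with hA3
    set rule : Rule A 𝔸 3 :=
      { head := ⟨2, ![0, 2], pairRel (Wrel I i j (l + 1))⟩
        idb := some ⟨2, ![0, 1], pairRel (Wrel I i j l)⟩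
        edb := [A1, A2, A3]
        head_arity := by norm_num
        idb_arity := by
          intro a ha
          simp only [Option.mem_def, Option.some_inj] at ha
          subst ha; norm_num
        edb_arity := by
          intro a ha
          simp only [List.mem_cons, List.not_mem_nil, or_false] at ha
          rcases ha with rfl | rfl | rfl <;> norm_num
        edb_basic := by
          intro a ha
          simp only [List.mem_cons, List.not_mem_nil, or_false] at ha
          rcases ha with rfl | rfl | rfl
          · exact hI _ hconB1
          · exact hI _ hconB2
          · exact hI _ hconE
        nodup := by
          refine List.nodup_cons.mpr ⟨?_, List.nodup_cons.mpr ⟨?_, List.nodup_singleton _⟩⟩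
          · intro h
            rcases List.mem_cons.mp h with h | h
            · rw [hA1, hA2] at h
              injection h with h1 h2 h3
              exact absurd (congrFun h2 0) (by decide)
            · rw [List.mem_singleton] at h
              rw [hA1, hA3] at h
              injection h with h1 _ _
              exact absurd h1 (by decide)
          · intro h
            rw [List.mem_singleton] at h
            rw [hA2, hA3] at h
            injection h with h1 _ _
            exact absurd h1 (by decide)
        consistent := by
          intro f hidb hedb
          have h0 : (f 0, f 1) ∈ Wrel I i j l := hidb _ rfl
          have hb1 : f 1 ∈ I.B l := hedb A1 (by simp)
          have hb2 : f 2 ∈ I.B (l + 1) := hedb A2 (by simp)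
          have he : (f 1, f 2) ∈ I.E l := hedb A3 (by simp)
          exact ⟨h0.1, hb2, h0.2.2.tail (Or.inl ⟨hil, hlj, rfl, hb1, hb2, he⟩)⟩
        mirror := by
          intro a ha f hhead hedb
          simp only [Option.mem_def, Option.some_inj] at ha
          subst ha
          have hh : (f 0, f 2) ∈ Wrel I i j (l + 1) := hhead
          have hb1 : f 1 ∈ I.B l := hedb A1 (by simp)
          have hb2 : f 2 ∈ I.B (l + 1) := hedb A2 (by simp)
          have he : (f 1, f 2) ∈ I.E l := hedb A3 (by simp)
          exact ⟨hh.1, hb1, hh.2.2.tail (Or.inr ⟨hil, hlj, rfl, hb1, hb2, he⟩)⟩ }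
    have hstep := Derives.step (𝔸 := 𝔸) (r := 3) (I := I.toInstance) rule
      ![i, l, l + 1]
      (by
        intro a ha
        simp only [rule, Option.mem_def, Option.some_inj] at ha
        subst ha
        refine derives_congr ?_ (IH hlj')
        funext k; fin_cases k <;> rfl)
      (by
        intro a ha
        simp only [rule, List.mem_cons, List.not_mem_nil, or_false] at ha
        rcases ha with rfl | rfl | rfl
        · exact hconB1
        · exact hconB2
        · show (⟨2, (fun k : Fin 2 =>
              (![i, l, l + 1] : Fin 3 → ℕ) ((![1, 2] : Fin 2 → Fin 3) k),
              pairRel (I.E l))⟩ :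
              Σ n : ℕ, (Fin n → ℕ) × Set (Fin n → A)) ∈ I.toInstance.constraints
          rw [show (fun k : Fin 2 =>
              (![i, l, l + 1] : Fin 3 → ℕ) ((![1, 2] : Fin 2 → Fin 3) k)) = ![l, l + 1]
            from funext fun k => by fin_cases k <;> rfl]
          exact hconE)
    refine derives_congr ?_ hstep
    funext k; fin_cases k <;> rfl

/-- `𝒫_𝔸^3` derives `λ_{I,i,j}(i,j)`.
For every relational structure `𝔸`, every path instance `I` of `CSP(𝔸)` and
every `i ≤ j`, we have `𝒫_𝔸^3(I) ⊢ λ_{I,i,j}(i, j)`. -/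
theorem statement11 {A : Type} [Finite A] (𝔸 : RelStruct A) (I : PathInstance A)
    (hI : IsCSPInstance 𝔸 I.toInstance)
    (i j : ℕ) (h1 : 1 ≤ i) (hij : i ≤ j) (hj : j ≤ I.len) :
    Derives 𝔸 3 I.toInstance ![i, j] (pairRel (lamRel I i j)) :=
  main_aux 𝔸 I hI i j h1 hj j hij le_rfl

end CSPPaper
end

section
/- Let I be a path instance of length ℓ over a set A, let U be the variable set of the instance I_λ, and for each v ∈ U let D_v ⊆ B_v be the set of all values s(v) where s ranges over solutions of (I_λ)_{[1,v]} (the restriction of I_λ to its variables that are at most v). Then D_v = C_v for all v ∈ U. In particular, I_λ is satisfiable if and only if I is satisfiable. -/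
/-!
The values at `v` of solutions of `I_{[1,v]}` are obtained by forward propagation, so they form
`C_v`; the same holds in `I_λ`. Across a gap `u < w` of `U` the propagation in `I_λ` goes through
`λ_{I,u,w}`. Since `B_{i,i+1}` has no backward edge for `u ≤ i < w`, a path of `Conn(I_{[u,w]})`
that starts in `C_u` can never step back out of the sets `C_i`, so it ends in `C_w`; conversely
every element of `C_w` is reached from `C_u` by a forward path. Hence propagation in `I_λ`
reproduces the sets `C_v`, and both instances are satisfiable exactly when `C_ℓ ≠ ∅`.
-/

namespace CSPPaper

section PathInstance

variable {A : Type} (P : PathInstance A)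

lemma reachSet_succ {i : ℕ} (hi : 1 ≤ i) :
    reachSet P (i + 1) = {b ∈ P.B (i + 1) | ∃ c ∈ reachSet P i, (c, b) ∈ P.E i} := by
  obtain ⟨j, rfl⟩ := Nat.exists_eq_add_of_le' hi
  rfl

lemma reachSet_subset_B {i : ℕ} (hi : 1 ≤ i) : reachSet P i ⊆ P.B i := by
  obtain ⟨j, rfl⟩ := Nat.exists_eq_add_of_le' hi
  cases j with
  | zero => exact subset_rfl
  | succ j => exact fun _ hb => hb.1

variable {P}

lemma IsSolutionOn.mono_right {a b b' : ℕ} {s : ℕ → A} (hs : IsSolutionOn P a b' s)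
    (hb : b ≤ b') : IsSolutionOn P a b s :=
  ⟨fun i h1 h2 => hs.1 i h1 (h2.trans hb), fun i h1 h2 => hs.2 i h1 (h2.trans hb)⟩

lemma IsSolutionOn.update_succ {a t : ℕ} {s : ℕ → A} (hs : IsSolutionOn P a t s) {b : A}
    (hb : b ∈ P.B (t + 1)) (he : (s t, b) ∈ P.E t) :
    IsSolutionOn P a (t + 1) (Function.update s (t + 1) b) := by
  constructor
  · intro i h1 h2
    rcases Nat.lt_or_eq_of_le h2 with h | rfl
    · rw [Function.update_of_ne (by omega)]
      exact hs.1 i h1 (by omega)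
    · rwa [Function.update_self]
  · intro i h1 h2
    rw [Function.update_of_ne (by omega)]
    rcases Nat.lt_or_eq_of_le h2 with h | h
    · rw [Function.update_of_ne (by omega)]
      exact hs.2 i h1 (by omega)
    · obtain rfl : i = t := by omega
      rwa [Function.update_self]

variable (P)

lemma values_isSolutionOn_eq_reachSet {t : ℕ} (ht : 1 ≤ t) :
    {a | ∃ s : ℕ → A, IsSolutionOn P 1 t s ∧ s t = a} = reachSet P t := by
  induction t, ht using Nat.le_induction with
  | base =>
    ext a
    constructor
    · rintro ⟨s, hs, rfl⟩
      exact hs.1 1 le_rfl le_rfl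
    · intro ha
      refine ⟨fun _ => a, ⟨fun i h1 h2 => ?_, fun i _ _ => by omega⟩, rfl⟩
      obtain rfl : i = 1 := by omega
      exact ha
  | succ t ht ih =>
    ext b
    rw [reachSet_succ P ht, ← ih]
    constructor
    · rintro ⟨s, hs, rfl⟩
      exact ⟨hs.1 _ (by omega) le_rfl, s t, ⟨s, hs.mono_right t.le_succ, rfl⟩,
        hs.2 t ht le_rfl⟩
    · rintro ⟨hb, _, ⟨s, hs, rfl⟩, he⟩
      exact ⟨_, hs.update_succ hb he, Function.update_self ..⟩

lemma exists_isSolution_iff_reachSet_nonempty (hlen : 1 ≤ P.len) :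
    (∃ s, IsSolution P s) ↔ (reachSet P P.len).Nonempty := by
  rw [← values_isSolutionOn_eq_reachSet P hlen]
  exact ⟨fun ⟨s, hs⟩ => ⟨s P.len, s, hs, rfl⟩, fun ⟨_, s, hs, _⟩ => ⟨s, hs⟩⟩

lemma isSolution_of_len_eq_zero (hlen : P.len = 0) (s : ℕ → A) : IsSolution P s :=
  ⟨fun _ _ _ => by omega, fun _ _ _ => by omega⟩

end PathInstance

section Conn

variable {A : Type} (I : PathInstance A) {u w : ℕ}

lemma snd_mem_reachSet_of_reflTransGen (hu : 1 ≤ u) (hw : w ≤ I.len)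
    (hnb : ∀ i, u ≤ i → i + 1 ≤ w → ¬ BackwardAt I i) {a : A} (ha : a ∈ reachSet I u)
    {p : ℕ × A} (hp : Relation.ReflTransGen
      (fun p q => connAdj I u w p q ∨ connAdj I u w q p) (u, a) p) :
    p.2 ∈ reachSet I p.1 := by
  induction hp with
  | refl => exact ha
  | @tail q r _ hqr ih =>
    rcases hqr with ⟨h1, -, h3, -, hr, he⟩ | ⟨h1, h2, h3, hr, -, he⟩
    · rw [h3, reachSet_succ I (hu.trans h1)]
      exact ⟨h3 ▸ hr, q.2, ih, he⟩
    · by_contra hr'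
      exact hnb r.1 h1 h2 ⟨hu.trans h1, h2.trans hw, r.2, q.2, he, hr, hr', h3 ▸ ih⟩

lemma exists_reflTransGen_of_mem_reachSet (hu : 1 ≤ u) {j : ℕ} (huj : u ≤ j) (hjw : j ≤ w)
    {b : A} (hb : b ∈ reachSet I j) :
    ∃ a ∈ reachSet I u, Relation.ReflTransGen
      (fun p q => connAdj I u w p q ∨ connAdj I u w q p) (u, a) (j, b) := by
  induction j, huj using Nat.le_induction generalizing b with
  | base => exact ⟨b, hb, .refl⟩
  | succ j huj ih =>
    rw [reachSet_succ I (hu.trans huj)] at hb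
    obtain ⟨hbB, c, hc, he⟩ := hb
    obtain ⟨a, ha, hpath⟩ := ih (by omega) hc
    exact ⟨a, ha, hpath.tail (Or.inl ⟨huj, hjw, rfl,
      reachSet_subset_B I (hu.trans huj) hc, hbB, he⟩)⟩

lemma reachSet_eq_of_lamRel (hu : 1 ≤ u) (huw : u ≤ w) (hw : w ≤ I.len)
    (hnb : ∀ i, u ≤ i → i + 1 ≤ w → ¬ BackwardAt I i) :
    {b ∈ I.B w | ∃ c ∈ reachSet I u, (c, b) ∈ lamRel I u w} = reachSet I w := by
  ext b
  constructor
  · rintro ⟨-, c, hc, -, -, hpath⟩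
    exact snd_mem_reachSet_of_reflTransGen I hu hw hnb hc hpath
  · intro hb
    obtain ⟨a, ha, hpath⟩ := exists_reflTransGen_of_mem_reachSet I hu huw le_rfl hb
    have hbB := reachSet_subset_B I (hu.trans huw) hb
    exact ⟨hbB, a, ha, reachSet_subset_B I hu ha, hbB, hpath⟩

end Conn

section LambdaInstance

variable {A : Type} (I : PathInstance A)

lemma mem_lamVars_iff {v : ℕ} :
    v ∈ lamVars I ↔ (1 ≤ v ∧ v ≤ I.len) ∧
      (v = 1 ∨ v = I.len ∨ BackwardAt I v ∨ (2 ≤ v ∧ BackwardAt I (v - 1))) := by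
  simp [lamVars, Finset.mem_filter, Finset.mem_Icc]

lemma one_mem_lamVars (hlen : 1 ≤ I.len) : 1 ∈ lamVars I :=
  (mem_lamVars_iff I).mpr ⟨⟨le_rfl, hlen⟩, Or.inl rfl⟩

lemma len_mem_lamVars (hlen : 1 ≤ I.len) : I.len ∈ lamVars I :=
  (mem_lamVars_iff I).mpr ⟨⟨hlen, le_rfl⟩, Or.inr (Or.inl rfl)⟩

lemma mem_lamVars_of_backwardAt {i : ℕ} (h : BackwardAt I i) :
    i ∈ lamVars I ∧ i + 1 ∈ lamVars I := by
  obtain ⟨h1, h2, -⟩ := id h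
  refine ⟨(mem_lamVars_iff I).mpr ⟨⟨h1, by omega⟩, Or.inr (Or.inr (Or.inl h))⟩,
    (mem_lamVars_iff I).mpr ⟨⟨by omega, h2⟩, Or.inr (Or.inr (Or.inr ⟨by omega, ?_⟩))⟩⟩
  simpa using h

lemma lamInst_len_pos_iff : 0 < (lamInst I).len ↔ 0 < I.len := by
  change 0 < (lamVars I).card ↔ _
  refine ⟨fun h => ?_, fun h => Finset.card_pos.mpr ⟨1, one_mem_lamVars I h⟩⟩
  obtain ⟨v, hv⟩ := Finset.card_pos.mp h
  have := ((mem_lamVars_iff I).mp hv).1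
  omega

lemma lamEnum_eq_orderEmbOfFin {t : ℕ} (h1 : 1 ≤ t) (h2 : t ≤ (lamVars I).card) :
    lamEnum I t = (lamVars I).orderEmbOfFin rfl ⟨t - 1, by omega⟩ := by
  rw [lamEnum, Finset.orderEmbOfFin_apply, List.getD_eq_getElem _ _ (by simp; omega)]
  rfl

lemma lamEnum_mem {t : ℕ} (h1 : 1 ≤ t) (h2 : t ≤ (lamVars I).card) :
    lamEnum I t ∈ lamVars I :=
  lamEnum_eq_orderEmbOfFin I h1 h2 ▸ Finset.orderEmbOfFin_mem _ _ _

lemma lamEnum_one (hlen : 1 ≤ I.len) : lamEnum I 1 = 1 := by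
  have hne : (lamVars I).Nonempty := ⟨1, one_mem_lamVars I hlen⟩
  rw [lamEnum_eq_orderEmbOfFin I le_rfl (Finset.card_pos.mpr hne),
    Finset.orderEmbOfFin_zero _ (Finset.card_pos.mpr hne)]
  exact le_antisymm (Finset.min'_le _ _ (one_mem_lamVars I hlen))
    (Finset.le_min' _ _ _ fun v hv => ((mem_lamVars_iff I).mp hv).1.1)

lemma lamEnum_len (hlen : 1 ≤ I.len) : lamEnum I (lamInst I).len = I.len := by
  change lamEnum I (lamVars I).card = I.len
  have hne : (lamVars I).Nonempty := ⟨1, one_mem_lamVars I hlen⟩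
  rw [lamEnum_eq_orderEmbOfFin I (Finset.card_pos.mpr hne) le_rfl,
    Finset.orderEmbOfFin_last _ (Finset.card_pos.mpr hne)]
  exact le_antisymm (Finset.max'_le _ _ _ fun v hv => ((mem_lamVars_iff I).mp hv).1.2)
    (Finset.le_max' _ _ (len_mem_lamVars I hlen))

lemma lamEnum_lt_lamEnum_succ {t : ℕ} (h1 : 1 ≤ t) (h2 : t + 1 ≤ (lamVars I).card) :
    lamEnum I t < lamEnum I (t + 1) := by
  rw [lamEnum_eq_orderEmbOfFin I h1 (by omega), lamEnum_eq_orderEmbOfFin I (by omega) h2,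
    OrderEmbedding.lt_iff_lt, Fin.lt_def]
  exact Nat.sub_lt_sub_right h1 t.lt_succ_self

lemma notMem_lamVars_of_lamEnum_lt_of_lt {t x : ℕ} (h1 : 1 ≤ t) (h2 : t + 1 ≤ (lamVars I).card)
    (hlt : lamEnum I t < x) (hlt' : x < lamEnum I (t + 1)) : x ∉ lamVars I := by
  intro hx
  obtain ⟨k, rfl⟩ : x ∈ Set.range ((lamVars I).orderEmbOfFin rfl) := by
    rwa [Finset.range_orderEmbOfFin]
  rw [lamEnum_eq_orderEmbOfFin I h1 (by omega), OrderEmbedding.lt_iff_lt] at hlt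
  rw [lamEnum_eq_orderEmbOfFin I (by omega) h2, OrderEmbedding.lt_iff_lt] at hlt'
  simp only [Fin.lt_def] at hlt hlt'
  omega

lemma not_backwardAt_of_lamEnum_le {t i : ℕ} (h1 : 1 ≤ t) (h2 : t + 1 ≤ (lamVars I).card)
    (hgap : lamEnum I (t + 1) ≠ lamEnum I t + 1) (hi : lamEnum I t ≤ i)
    (hi' : i + 1 ≤ lamEnum I (t + 1)) : ¬ BackwardAt I i := by
  intro hb
  obtain ⟨hiU, hi1U⟩ := mem_lamVars_of_backwardAt I hb
  rcases hi.eq_or_lt with rfl | hlt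
  · exact notMem_lamVars_of_lamEnum_lt_of_lt I h1 h2 (by omega) (by omega) hi1U
  · exact notMem_lamVars_of_lamEnum_lt_of_lt I h1 h2 hlt (by omega) hiU

theorem reachSet_lamInst {t : ℕ} (ht : 1 ≤ t) (htc : t ≤ (lamInst I).len) :
    reachSet (lamInst I) t = reachSet I (lamEnum I t) := by
  induction t, ht using Nat.le_induction with
  | base =>
    show I.B (lamEnum I 1) = reachSet I (lamEnum I 1)
    rw [lamEnum_one I ((lamInst_len_pos_iff I).mp htc)]
    rfl
  | succ t ht ih =>
    have htc' : t + 1 ≤ (lamVars I).card := htc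
    have hu := ((mem_lamVars_iff I).mp (lamEnum_mem I ht (by omega))).1
    have hw := ((mem_lamVars_iff I).mp (lamEnum_mem I (by omega) htc')).1
    rw [reachSet_succ _ ht, ih (by omega)]
    dsimp only [lamInst]
    by_cases hgap : lamEnum I (t + 1) = lamEnum I t + 1
    · rw [if_pos hgap, hgap, reachSet_succ I hu.1]
    · rw [if_neg hgap]
      exact reachSet_eq_of_lamRel I hu.1
        (lamEnum_lt_lamEnum_succ I ht htc').le hw.2
        fun i => not_backwardAt_of_lamEnum_le I ht htc' hgap

end LambdaInstance

theorem statement13_general {A : Type} (I : PathInstance A) :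
    (∀ t, 1 ≤ t → t ≤ (lamInst I).len →
      {a | ∃ s : ℕ → A, IsSolutionOn (lamInst I) 1 t s ∧ s t = a}
        = reachSet I (lamEnum I t)) ∧
    ((∃ s : ℕ → A, IsSolution (lamInst I) s) ↔ ∃ f : ℕ → A, IsSolution I f) := by
  refine ⟨fun t ht htc => by
    rw [values_isSolutionOn_eq_reachSet _ ht, reachSet_lamInst I ht htc], ?_⟩
  rcases Nat.eq_zero_or_pos I.len with hlen | hlen
  · have hlen' : (lamInst I).len = 0 := by
      have := lamInst_len_pos_iff I
      omega
    exact ⟨fun ⟨s, _⟩ => ⟨s, isSolution_of_len_eq_zero I hlen s⟩,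
      fun ⟨f, _⟩ => ⟨f, isSolution_of_len_eq_zero _ hlen' f⟩⟩
  · have hlen' := (lamInst_len_pos_iff I).mpr hlen
    rw [exists_isSolution_iff_reachSet_nonempty _ hlen',
      exists_isSolution_iff_reachSet_nonempty I hlen, reachSet_lamInst I hlen' le_rfl,
      lamEnum_len I hlen]

/-- `D_v = C_v`.
Let `I` be a path instance, and for each variable `v` of `I_λ` (here: position
`t` of the path instance `I_λ`, corresponding to the original variable
`lamEnum I t`), let `D_v ⊆ B_v` be the set of all values `s(v)` where `s`
ranges over solutions of `(I_λ)_{[1,v]}`. Then `D_v = C_v` for all `v ∈ U`.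
In particular, `I_λ` is satisfiable iff `I` is satisfiable. -/
theorem statement13 {A : Type} (I : PathInstance A) (hlen : 1 ≤ I.len) :
    (∀ t, 1 ≤ t → t ≤ (lamInst I).len →
      {a | ∃ s : ℕ → A, IsSolutionOn (lamInst I) 1 t s ∧ s t = a}
        = reachSet I (lamEnum I t)) ∧
    ((∃ s : ℕ → A, IsSolution (lamInst I) s) ↔ ∃ f : ℕ → A, IsSolution I f) :=
  statement13_general I

end CSPPaper
end
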